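/- arXiv:1412.5824 — 4 statements merged into one kernel-verified Lean document; each statement's English description precedes it below -/
import Mathlib

section
/- Let l > 0 and let Ā_l = {z ∈ ℂ : e^{-l} ≤ |z| ≤ 1} be the closed round annulus. Let γ(t) = c + r·exp(i·((1-t)θ₀ + t·θ₁)), t ∈ [0,1], be a circle arc with c ∈ ℂ, r > 0, θ₀, θ₁ ∈ ℝ, |θ₁ - θ₀| ≤ 2π, such that γ(t) ∈ Ā_l for all t ∈ [0,1], |γ(0)| = e^{-l} and |γ(1)| = 1 (the arc joins the inner boundary circle to the outer boundary circle). Then for every argument lift φ of γ, i.e. every continuous φ : [0,1] → ℝ with γ(t) = |γ(t)|·exp(i·φ(t)) for all t, one has |φ(1) - φ(0)| ≤ π. (In the paper's terms: the winding number of a circle arc joining the two boundary components of a Möbius annulus satisfies |w(α)| ≤ 1/2.) -/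
/-!
Write `c = ‖c‖ e^{iα}`. Along the arc, `‖γ(t)‖² = ‖c‖² + r² + 2r‖c‖ cos ψ(t)` with `ψ(t)` the
angle of the arc measured from `α`, so `cos ψ` is smallest at `t = 0` and largest at `t = 1`.
Comparing `cos ψ` at the two ends of every subarc centred at `ψ(t)` (sum-to-product) shows that
`sin ψ` has a constant sign: the arc lies in one closed half-plane bounded by the line `ℝc`.
A continuous argument of a path in such a half-plane stays in one closed interval of length `π`.
-/

open Set

/-- The circle arc `t ↦ c + r·exp(i((1-t)θ₀ + tθ₁))`. -/
noncomputable def circleArc (c : ℂ) (r θ₀ θ₁ : ℝ) (t : ℝ) : ℂ :=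
  c + (r : ℂ) * Complex.exp (Complex.I * (((1 - t) * θ₀ + t * θ₁ : ℝ) : ℂ))

/-- `φ` is a continuous argument lift of the path `γ` on `[0,1]`. -/
def IsArgLift (γ : ℝ → ℂ) (φ : ℝ → ℝ) : Prop :=
  ContinuousOn φ (Set.Icc 0 1) ∧
  ∀ t ∈ Set.Icc (0 : ℝ) 1,
    γ t = ((‖γ t‖ : ℝ) : ℂ) * Complex.exp (Complex.I * (φ t : ℂ))

open Real Complex ComplexConjugate

namespace Real

theorem sin_add_div_two_nonpos_of_cos_le_cos {a b : ℝ} (hab : a < b) (hba : b < a + 2 * π)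
    (h : cos a ≤ cos b) : sin ((a + b) / 2) ≤ 0 := by
  have hpos : 0 < sin ((b - a) / 2) := sin_pos_of_pos_of_lt_pi (by linarith) (by linarith)
  have hdiff := cos_sub_cos b a
  rw [add_comm b a] at hdiff
  nlinarith

theorem sin_nonpos_of_isMinOn_isMaxOn {u d : ℝ} (hd : 0 < d) (hd' : d ≤ 2 * π)
    (hmin : IsMinOn (fun t => cos (u + t * d)) (Icc 0 1) 0)
    (hmax : IsMaxOn (fun t => cos (u + t * d)) (Icc 0 1) 1) :
    ∀ t ∈ Icc (0 : ℝ) 1, sin (u + t * d) ≤ 0 := by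
  have hmid : Ioo 0 (1 / 2) ∪ Ioo (1 / 2) 1 ⊆ {t | sin (u + t * d) ≤ 0} := by
    rintro t (⟨ht₀, ht₁⟩ | ⟨ht₀, ht₁⟩) <;> show sin (u + t * d) ≤ 0
    · have h := isMinOn_iff.mp hmin (2 * t) ⟨by linarith, by linarith⟩
      convert sin_add_div_two_nonpos_of_cos_le_cos (by nlinarith) (by nlinarith) h using 2
      ring
    · have h := isMaxOn_iff.mp hmax (2 * t - 1) ⟨by linarith, by linarith⟩
      convert sin_add_div_two_nonpos_of_cos_le_cos (by nlinarith) (by nlinarith) h using 2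
      ring
  have hclosed : IsClosed {t | sin (u + t * d) ≤ 0} := isClosed_le (by fun_prop) continuous_const
  have hcl := hclosed.closure_subset_iff.mpr hmid
  rwa [closure_union, closure_Ioo (by norm_num), closure_Ioo (by norm_num),
    Icc_union_Icc_eq_Icc (by norm_num) (by norm_num)] at hcl

theorem mul_sin_nonpos_of_isMinOn_isMaxOn {u d : ℝ} (hd : |d| ≤ 2 * π)
    (hmin : IsMinOn (fun t => cos (u + t * d)) (Icc 0 1) 0)
    (hmax : IsMaxOn (fun t => cos (u + t * d)) (Icc 0 1) 1) :
    ∀ t ∈ Icc (0 : ℝ) 1, d * sin (u + t * d) ≤ 0 := by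
  intro t ht
  rcases lt_trichotomy d 0 with hd₀ | rfl | hd₀
  · have hreflect : (fun t => cos (-u + t * -d)) = fun t => cos (u + t * d) := by
      funext t
      rw [← cos_neg]
      ring_nf
    have h := sin_nonpos_of_isMinOn_isMaxOn (u := -u) (by linarith) (by linarith [neg_abs_le d])
      (hreflect ▸ hmin) (hreflect ▸ hmax) t ht
    rw [show -u + t * -d = -(u + t * d) by ring, sin_neg] at h
    nlinarith
  · simp
  · exact mul_nonpos_of_nonneg_of_nonpos hd₀.le <|
      sin_nonpos_of_isMinOn_isMaxOn hd₀ (by linarith [le_abs_self d]) hmin hmax t ht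

theorem abs_sub_le_pi_of_sin_nonneg {a b : ℝ} (h : ∀ x ∈ uIcc a b, 0 ≤ sin x) :
    |b - a| ≤ π := by
  wlog hab : a ≤ b generalizing a b
  · rw [abs_sub_comm]
    exact this (uIcc_comm a b ▸ h) (le_of_not_ge hab)
  rw [uIcc_of_le hab] at h
  rw [abs_of_nonneg (sub_nonneg.2 hab)]
  by_contra! hlt
  set ε := min (b - a - π) (π / 2)
  have hε : 0 < ε := lt_min (by linarith) (by positivity)
  have hε' : ε < π := (min_le_right _ _).trans_lt (by linarith [pi_pos])
  -- `sin x ≥ 0` and `sin (x + π) = -sin x ≥ 0` force `sin` to vanish on `[a, a + ε]`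
  have hzero : ∀ x, a ≤ x → x ≤ a + ε → sin x = 0 := by
    intro x hx hx'
    have h₁ := h x ⟨hx, by linarith [min_le_left (b - a - π) (π / 2)]⟩
    have h₂ := h (x + π) ⟨by linarith [pi_pos], by linarith [min_le_left (b - a - π) (π / 2)]⟩
    rw [sin_add_pi] at h₂
    linarith
  have ha := hzero a le_rfl (by linarith)
  have haε := hzero (a + ε) (by linarith) le_rfl
  rw [sin_add, ha, zero_mul, zero_add] at haε
  rcases mul_eq_zero.mp haε with hcos | hsin
  · simpa [ha, hcos] using sin_sq_add_cos_sq a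
  · exact (sin_pos_of_pos_of_lt_pi hε hε').ne' hsin

end Real

namespace Complex

theorem re_ofReal_mul_exp_mul_conj (ρ θ : ℝ) (w : ℂ) :
    ((ρ : ℂ) * exp (I * θ) * conj w).re = ρ * ‖w‖ * Real.cos (θ - arg w) := by
  simp only [mul_comm I, mul_re, mul_im, ofReal_re, ofReal_im, exp_ofReal_mul_I_re,
    exp_ofReal_mul_I_im, conj_re, conj_im, ← norm_mul_cos_arg w, ← norm_mul_sin_arg w,
    Real.cos_sub]
  ring

theorem im_ofReal_mul_exp_mul_conj (ρ θ : ℝ) (w : ℂ) :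
    ((ρ : ℂ) * exp (I * θ) * conj w).im = ρ * ‖w‖ * Real.sin (θ - arg w) := by
  simp only [mul_comm I, mul_re, mul_im, ofReal_re, ofReal_im, exp_ofReal_mul_I_re,
    exp_ofReal_mul_I_im, conj_re, conj_im, ← norm_mul_cos_arg w, ← norm_mul_sin_arg w,
    Real.sin_sub]
  ring

end Complex

theorem IsArgLift.abs_sub_le_pi {γ : ℝ → ℂ} {φ : ℝ → ℝ} (hφ : IsArgLift γ φ) {w : ℂ}
    (hw : w ≠ 0) (hγ : ∀ t ∈ Icc (0 : ℝ) 1, γ t ≠ 0)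
    (hhalf : ∀ t ∈ Icc (0 : ℝ) 1, 0 ≤ (γ t * conj w).im) :
    |φ 1 - φ 0| ≤ π := by
  set g : ℝ → ℝ := fun t => φ t - arg w
  have hsin : ∀ t ∈ Icc (0 : ℝ) 1, 0 ≤ Real.sin (g t) := by
    intro t ht
    have h := hhalf t ht
    rw [hφ.2 t ht, im_ofReal_mul_exp_mul_conj] at h
    exact nonneg_of_mul_nonneg_right h (by have := hγ t ht; positivity)
  have hivt : uIcc (g 0) (g 1) ⊆ g '' Icc 0 1 := by
    rw [← uIcc_of_le zero_le_one]
    exact intermediate_value_uIcc ((hφ.1.sub continuousOn_const).mono (uIcc_of_le zero_le_one).le)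
  have hg := Real.abs_sub_le_pi_of_sin_nonneg fun x hx => by
    obtain ⟨t, ht, rfl⟩ := hivt hx
    exact hsin t ht
  simpa only [g, sub_sub_sub_cancel_right] using hg

section circleArc

variable (c : ℂ) (r θ₀ θ₁ : ℝ)

theorem norm_circleArc_sq (t : ℝ) : ‖circleArc c r θ₀ θ₁ t‖ ^ 2 =
    ‖c‖ ^ 2 + r ^ 2 + 2 * (r * ‖c‖ * Real.cos ((θ₀ - arg c) + t * (θ₁ - θ₀))) := by
  rw [← normSq_eq_norm_sq, circleArc, add_comm, normSq_add, re_ofReal_mul_exp_mul_conj,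
    normSq_mul, normSq_ofReal, normSq_eq_norm_sq, norm_exp_I_mul_ofReal, normSq_eq_norm_sq]
  ring_nf

theorem im_circleArc_mul_conj (t : ℝ) : (circleArc c r θ₀ θ₁ t * conj c).im =
    r * ‖c‖ * Real.sin ((θ₀ - arg c) + t * (θ₁ - θ₀)) := by
  rw [circleArc, add_mul, add_im, mul_conj, ofReal_im, zero_add, im_ofReal_mul_exp_mul_conj]
  ring_nf

theorem norm_circleArc_le_norm_circleArc_iff (s t : ℝ) :
    ‖circleArc c r θ₀ θ₁ s‖ ≤ ‖circleArc c r θ₀ θ₁ t‖ ↔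
      r * ‖c‖ * Real.cos ((θ₀ - arg c) + s * (θ₁ - θ₀)) ≤
        r * ‖c‖ * Real.cos ((θ₀ - arg c) + t * (θ₁ - θ₀)) := by
  rw [← sq_le_sq₀ (norm_nonneg _) (norm_nonneg _), norm_circleArc_sq, norm_circleArc_sq]
  constructor <;> intro h <;> linarith

end circleArc

/-- A circle arc in the closed annulus `{e^{-l} ≤ |z| ≤ 1}` joining the inner
boundary circle to the outer boundary circle has winding number at most `1/2`:
any argument lift `φ` satisfies `|φ(1) - φ(0)| ≤ π`. -/
theorem circleArc_winding_le_pi (l : ℝ) (hl : 0 < l) (c : ℂ) (r θ₀ θ₁ : ℝ)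
    (hr : 0 < r) (hθ : |θ₁ - θ₀| ≤ 2 * Real.pi)
    (hmem : ∀ t ∈ Set.Icc (0 : ℝ) 1,
      Real.exp (-l) ≤ ‖circleArc c r θ₀ θ₁ t‖ ∧
      ‖circleArc c r θ₀ θ₁ t‖ ≤ 1)
    (h0 : ‖circleArc c r θ₀ θ₁ 0‖ = Real.exp (-l))
    (h1 : ‖circleArc c r θ₀ θ₁ 1‖ = 1)
    (φ : ℝ → ℝ) (hφ : IsArgLift (circleArc c r θ₀ θ₁) φ) :
    |φ 1 - φ 0| ≤ Real.pi := by
  have hcos_iff := norm_circleArc_le_norm_circleArc_iff c r θ₀ θ₁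
  have hends : ‖circleArc c r θ₀ θ₁ 0‖ < ‖circleArc c r θ₀ θ₁ 1‖ := by
    rw [h0, h1, Real.exp_lt_one_iff]
    linarith
  have hlt := (lt_iff_lt_of_le_iff_le (hcos_iff 1 0)).mp hends
  have hk : 0 < r * ‖c‖ := by
    refine (mul_nonneg hr.le (norm_nonneg c)).lt_of_ne' fun hk => ?_
    simp [hk] at hlt
  have hmin : IsMinOn (fun t => Real.cos ((θ₀ - arg c) + t * (θ₁ - θ₀))) (Icc 0 1) 0 :=
    isMinOn_iff.mpr fun t ht =>
      le_of_mul_le_mul_left ((hcos_iff 0 t).mp (h0.le.trans (hmem t ht).1)) hk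
  have hmax : IsMaxOn (fun t => Real.cos ((θ₀ - arg c) + t * (θ₁ - θ₀))) (Icc 0 1) 1 :=
    isMaxOn_iff.mpr fun t ht =>
      le_of_mul_le_mul_left ((hcos_iff t 1).mp ((hmem t ht).2.trans h1.ge)) hk
  have hθ₀₁ : θ₀ ≠ θ₁ := by
    rintro rfl
    simp at hlt
  have hc : c ≠ 0 := norm_ne_zero_iff.mp (right_ne_zero_of_mul hk.ne')
  -- the arc lies on the side of the line `ℝc` given by the sign of `θ₀ - θ₁`
  have hsign := Real.mul_sin_nonpos_of_isMinOn_isMaxOn hθ hmin hmax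
  refine hφ.abs_sub_le_pi (w := ((θ₀ - θ₁ : ℝ) : ℂ) * c)
    (mul_ne_zero (ofReal_ne_zero.mpr (sub_ne_zero.mpr hθ₀₁)) hc)
    (fun t ht => norm_pos_iff.mp ((Real.exp_pos _).trans_le (hmem t ht).1)) fun t ht => ?_
  rw [map_mul, conj_ofReal, mul_left_comm, im_ofReal_mul, im_circleArc_mul_conj]
  nlinarith [hsign t ht]
end

section
/- Let l > 0 and let Ā_l = {z ∈ ℂ : e^{-l} ≤ |z| ≤ 1}. Then every point of the inner boundary circle can be joined to every point of the outer boundary circle by a circle arc lying in Ā_l: for all x, y ∈ ℂ with |x| = e^{-l} and |y| = 1, there exist c ∈ ℂ, r > 0 and θ₀, θ₁ ∈ ℝ with |θ₁ - θ₀| ≤ 2π such that the circle arc γ(t) = c + r·exp(i·((1-t)θ₀ + t·θ₁)) satisfies γ(0) = x, γ(1) = y, and e^{-l} ≤ |γ(t)| ≤ 1 for all t ∈ [0,1]. -/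
/-! The arc lies on the circle of radius `r` internally tangent to the unit circle at `y` and
passing through `x`. Written as `y((1 - r) + r e^{iu})` with `u` running from `δ` to `0`, where
`|δ| ≤ π`, its squared norm is `1 - 2r(1 - r)(1 - cos u)`: at most `1`, and at least its value
`‖x‖²` at `u = δ` since `cos u ≥ cos δ`. -/

open Complex
open scoped Real

theorem normSq_one_sub_add_mul_exp (r u : ℝ) :
    normSq ((1 - r : ℂ) + r * exp (u * I)) = 1 - 2 * r * (1 - r) * (1 - Real.cos u) := by
  rw [normSq_apply]
  simp only [add_re, add_im, mul_re, mul_im, sub_re, sub_im, one_re, one_im, ofReal_re, ofReal_im,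
    exp_ofReal_mul_I_re, exp_ofReal_mul_I_im]
  linear_combination r ^ 2 * Real.sin_sq_add_cos_sq u

theorem Real.cos_le_cos_mul_of_abs_le {δ s : ℝ} (hδ : |δ| ≤ π) (hs : |s| ≤ 1) :
    Real.cos δ ≤ Real.cos (s * δ) := by
  rw [← Real.cos_abs δ, ← Real.cos_abs (s * δ)]
  refine Real.cos_le_cos_of_nonneg_of_le_pi (abs_nonneg _) hδ ?_
  rw [abs_mul]
  exact mul_le_of_le_one_left (abs_nonneg δ) hs

theorem exists_one_sub_add_mul_exp_eq {w : ℂ} (hw : ‖w‖ < 1) :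
    ∃ r δ : ℝ, 0 < r ∧ r < 1 ∧ |δ| ≤ π ∧ (1 - r : ℂ) + r * exp (δ * I) = w := by
  have hre : w.re < 1 := (re_le_norm w).trans_lt hw
  have hw1 : normSq (w - 1) < 2 * (1 - w.re) := by
    have : normSq w < 1 := by rw [← Complex.sq_norm]; nlinarith [norm_nonneg w]
    rw [normSq_sub, normSq_one]
    simp only [map_one, mul_one]
    linarith
  have hw0 : 0 < normSq (w - 1) := normSq_pos.2 (sub_ne_zero.2 (by rintro rfl; simp at hw))
  -- The circle of radius `r` tangent to the unit circle at `1` passes through `w` iff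
  -- `‖w - 1 + r‖ = r`, which is linear in `r`.
  set r := normSq (w - 1) / (2 * (1 - w.re))
  have hr0 : 0 < r := by positivity
  have hr1 : r < 1 := (div_lt_one (by linarith)).2 hw1
  have hcenter : ‖w - (1 - r)‖ = r := by
    have : normSq (w - (1 - r)) = r ^ 2 := by
      rw [show w - (1 - r) = (w - 1) + (r : ℂ) by ring, normSq_add, normSq_ofReal]
      have hkey : r * (2 * (1 - w.re)) = normSq (w - 1) := div_mul_cancel₀ _ (by linarith)
      simp only [conj_ofReal, mul_re, ofReal_re, ofReal_im, sub_re, one_re, sub_im, mul_zero,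
        sub_zero]
      linear_combination -hkey
    rw [← sq_eq_sq₀ (norm_nonneg _) hr0.le, Complex.sq_norm, this]
  refine ⟨r, arg (w - (1 - r)), hr0, hr1, abs_arg_le_pi _, ?_⟩
  have hpolar := norm_mul_exp_arg_mul_I (w - (1 - r))
  rw [hcenter] at hpolar
  linear_combination hpolar

theorem circleArc_eq_mul_one_sub_add_mul_exp {y : ℂ} (hy : ‖y‖ = 1) (r δ t : ℝ) :
    circleArc ((1 - r) * y) r (arg y + δ) (arg y) t
      = y * ((1 - r : ℂ) + r * exp (((1 - t) * δ : ℝ) * I)) := by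
  have hyexp : exp (arg y * I) = y := by simpa [hy] using norm_mul_exp_arg_mul_I y
  rw [circleArc, show ((1 - t) * (arg y + δ) + t * arg y : ℝ) = arg y + (1 - t) * δ by ring,
    ofReal_add, mul_add, mul_comm I, mul_comm I, exp_add, hyexp]
  ring

theorem exists_circleArc_norm_mem_Icc {x y : ℂ} (hx : ‖x‖ < 1) (hy : ‖y‖ = 1) :
    ∃ (c : ℂ) (r θ₀ θ₁ : ℝ), 0 < r ∧ |θ₁ - θ₀| ≤ 2 * π ∧
      circleArc c r θ₀ θ₁ 0 = x ∧ circleArc c r θ₀ θ₁ 1 = y ∧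
      ∀ t ∈ Set.Icc (0 : ℝ) 1, ‖x‖ ≤ ‖circleArc c r θ₀ θ₁ t‖ ∧ ‖circleArc c r θ₀ θ₁ t‖ ≤ 1 := by
  have hy0 : y ≠ 0 := norm_ne_zero_iff.1 (by rw [hy]; exact one_ne_zero)
  obtain ⟨r, δ, hr0, hr1, hδ, hw⟩ :=
    exists_one_sub_add_mul_exp_eq (w := x / y) (by rwa [norm_div, hy, div_one])
  refine ⟨(1 - r) * y, r, arg y + δ, arg y, hr0, ?_, ?_, ?_, fun t ht => ?_⟩
  · rw [show arg y - (arg y + δ) = -δ by ring, abs_neg]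
    linarith [Real.pi_pos]
  · rw [circleArc_eq_mul_one_sub_add_mul_exp hy, sub_zero, one_mul, hw, mul_div_cancel₀ _ hy0]
  · simp [circleArc_eq_mul_one_sub_add_mul_exp hy]
  · have hnorm : ∀ u : ℝ, ‖y * ((1 - r : ℂ) + r * exp (u * I))‖ ^ 2
        = 1 - 2 * r * (1 - r) * (1 - Real.cos u) := fun u => by
      rw [norm_mul, hy, one_mul, Complex.sq_norm, normSq_one_sub_add_mul_exp]
    have hx' : ‖x‖ ^ 2 = 1 - 2 * r * (1 - r) * (1 - Real.cos δ) := by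
      rw [← hnorm, hw, mul_div_cancel₀ _ hy0]
    have hcos : Real.cos δ ≤ Real.cos ((1 - t) * δ) :=
      Real.cos_le_cos_mul_of_abs_le hδ (abs_le.2 ⟨by linarith [ht.2], by linarith [ht.1]⟩)
    have hrr : 0 < 2 * r * (1 - r) := by nlinarith
    rw [circleArc_eq_mul_one_sub_add_mul_exp hy]
    constructor
    · refine (pow_le_pow_iff_left₀ (norm_nonneg _) (norm_nonneg _) two_ne_zero).1 ?_
      rw [hx', hnorm]
      nlinarith
    · refine (pow_le_one_iff_of_nonneg (norm_nonneg _) two_ne_zero).1 ?_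
      rw [hnorm]
      nlinarith [Real.cos_le_one ((1 - t) * δ)]

/-- Any point of the inner boundary circle of the closed annulus
`{e^{-l} ≤ |z| ≤ 1}` can be joined to any point of the outer boundary circle by
a circle arc lying in the annulus. -/
theorem exists_circleArc_joining (l : ℝ) (hl : 0 < l) (x y : ℂ)
    (hx : ‖x‖ = Real.exp (-l)) (hy : ‖y‖ = 1) :
    ∃ (c : ℂ) (r θ₀ θ₁ : ℝ), 0 < r ∧ |θ₁ - θ₀| ≤ 2 * Real.pi ∧
      circleArc c r θ₀ θ₁ 0 = x ∧ circleArc c r θ₀ θ₁ 1 = y ∧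
      ∀ t ∈ Set.Icc (0 : ℝ) 1,
        Real.exp (-l) ≤ ‖circleArc c r θ₀ θ₁ t‖ ∧
        ‖circleArc c r θ₀ θ₁ t‖ ≤ 1 := by
  rw [← hx]
  exact exists_circleArc_norm_mem_Icc (by rw [hx, Real.exp_lt_one_iff]; linarith) hy
end

section
/- Let l > 0 and let Ā_l = {z ∈ ℂ : e^{-l} ≤ |z| ≤ 1}. Let x, y ∈ ℂ with |x| = e^{-l} and |y| = 1. Then (x, y) is a singular pair — i.e. there exist c ∈ ℂ and r > 0 with |c| < r such that the circle {z ∈ ℂ : |z - c| = r} is contained in Ā_l and contains both x and y — if and only if y = -e^{l}·x. In particular each point of the inner boundary circle belongs to exactly one singular pair. -/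
/-- `(x, y)` is a singular pair on the boundary of the closed annulus
`{e^{-l} ≤ |z| ≤ 1}`: some circle contained in the annulus and enclosing `0`
passes through both `x` and `y`. -/
def SingularPair (l : ℝ) (x y : ℂ) : Prop :=
  ∃ (c : ℂ) (r : ℝ), ‖c‖ < r ∧
    (∀ z : ℂ, ‖z - c‖ = r →
      Real.exp (-l) ≤ ‖z‖ ∧ ‖z‖ ≤ 1) ∧
    ‖x - c‖ = r ∧ ‖y - c‖ = r

/-!
A circle `‖z - c‖ = r` enclosing `0` has `r - ‖c‖` and `r + ‖c‖` as its smallest and largest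
norms, attained on the line through `0` and `c`. If it lies in the annulus
`‖x‖ ≤ ‖z‖ ≤ ‖y‖` and passes through `x` and `y`, then `‖x - c‖ = ‖x‖ + ‖c‖` and
`‖y‖ = ‖y - c‖ + ‖c‖`: both triangle inequalities are equalities, so by strict convexity
`x` lies on the ray of `-c` and `y` on the ray of `c`, i.e. `y` is a positive multiple of `-x`.
Conversely, for such `x` and `y` the circle with diameter `[x, y]` works.
-/

section Annulus

variable {E : Type*} [NormedAddCommGroup E] [NormedSpace ℝ E]

lemma exists_mem_sphere_norm_eq {c : E} (hc : c ≠ 0) (t : ℝ) :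
    ∃ z : E, ‖z - c‖ = |t| ∧ ‖z‖ = |‖c‖ + t| := by
  have hc' : ‖c‖ ≠ 0 := norm_ne_zero_iff.mpr hc
  have hu : ‖‖c‖⁻¹ • c‖ = 1 := by rw [norm_smul, norm_inv, norm_norm, inv_mul_cancel₀ hc']
  refine ⟨(‖c‖ + t) • ‖c‖⁻¹ • c, ?_, ?_⟩
  · rw [add_smul, smul_inv_smul₀ hc', add_sub_cancel_left, norm_smul, hu, Real.norm_eq_abs,
      mul_one]
  · rw [norm_smul, hu, Real.norm_eq_abs, mul_one]

theorem sameRay_neg_of_sphere_subset_annulus [StrictConvexSpace ℝ E] {x y c : E} {r : ℝ}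
    (hxy : ‖x‖ < ‖y‖) (hcr : ‖c‖ ≤ r)
    (hsub : ∀ z : E, ‖z - c‖ = r → ‖x‖ ≤ ‖z‖ ∧ ‖z‖ ≤ ‖y‖)
    (hxc : ‖x - c‖ = r) (hyc : ‖y - c‖ = r) :
    SameRay ℝ y (-x) := by
  have hc : c ≠ 0 := by
    rintro rfl
    rw [sub_zero] at hxc hyc
    exact hxy.ne (hxc.trans hyc.symm)
  have hr : 0 ≤ r := (norm_nonneg c).trans hcr
  obtain ⟨z₁, hz₁c, hz₁⟩ := exists_mem_sphere_norm_eq hc (-r)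
  obtain ⟨z₂, hz₂c, hz₂⟩ := exists_mem_sphere_norm_eq hc r
  rw [abs_neg, abs_of_nonneg hr] at hz₁c
  rw [abs_of_nonneg hr] at hz₂c
  have hinner : ‖x‖ ≤ r - ‖c‖ := by
    have h := (hsub z₁ hz₁c).1
    rwa [hz₁, ← sub_eq_add_neg, abs_of_nonpos (by linarith), neg_sub] at h
  have houter : r + ‖c‖ ≤ ‖y‖ := by
    have h := (hsub z₂ hz₂c).2
    rwa [hz₂, abs_of_nonneg (by positivity), add_comm] at h
  have hx_ray : SameRay ℝ x (-c) := sameRay_iff_norm_add.mpr <| by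
    rw [← sub_eq_add_neg, norm_neg]
    linarith [norm_sub_le x c]
  have hy_ray : SameRay ℝ (y - c) c := sameRay_iff_norm_add.mpr <| by
    rw [sub_add_cancel]
    linarith [norm_sub_norm_le y c]
  have hyc_ray : SameRay ℝ y c := by simpa using hy_ray.add_left (SameRay.refl c)
  exact hyc_ray.trans (sameRay_neg_swap.mp hx_ray.symm) fun h => absurd h hc

theorem exists_sphere_subset_annulus_of_sameRay {x y : E} (hx : 0 < ‖x‖) (hxy : ‖x‖ ≤ ‖y‖)
    (h : SameRay ℝ y (-x)) :
    ∃ (c : E) (r : ℝ), ‖c‖ < r ∧ (∀ z : E, ‖z - c‖ = r → ‖x‖ ≤ ‖z‖ ∧ ‖z‖ ≤ ‖y‖) ∧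
      ‖x - c‖ = r ∧ ‖y - c‖ = r := by
  have hsum : ‖x + y‖ = ‖y‖ - ‖x‖ := by
    have := h.norm_sub
    rwa [sub_neg_eq_add, add_comm, norm_neg, abs_of_nonneg (by linarith)] at this
  have hdiff : ‖x - y‖ = ‖x‖ + ‖y‖ := by
    simpa [← sub_eq_add_neg] using (sameRay_neg_swap.mp h.symm).norm_add
  have hc : ‖(2 : ℝ)⁻¹ • (x + y)‖ = (‖y‖ - ‖x‖) / 2 := by
    rw [norm_smul, hsum]; norm_num; ring
  have hxc : ‖x - (2 : ℝ)⁻¹ • (x + y)‖ = (‖x‖ + ‖y‖) / 2 := by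
    rw [show x - (2 : ℝ)⁻¹ • (x + y) = (2 : ℝ)⁻¹ • (x - y) by module, norm_smul, hdiff]
    norm_num; ring
  have hyc : ‖y - (2 : ℝ)⁻¹ • (x + y)‖ = (‖x‖ + ‖y‖) / 2 := by
    rw [show y - (2 : ℝ)⁻¹ • (x + y) = -((2 : ℝ)⁻¹ • (x - y)) by module, norm_neg, norm_smul,
      hdiff]
    norm_num; ring
  refine ⟨(2 : ℝ)⁻¹ • (x + y), (‖x‖ + ‖y‖) / 2, by linarith, fun z hz => ?_, hxc, hyc⟩
  constructor
  · linarith [norm_sub_le z ((2 : ℝ)⁻¹ • (x + y))]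
  · linarith [norm_sub_norm_le z ((2 : ℝ)⁻¹ • (x + y))]

theorem exists_sphere_subset_annulus_iff_sameRay [StrictConvexSpace ℝ E] {x y : E}
    (hx : 0 < ‖x‖) (hxy : ‖x‖ < ‖y‖) :
    (∃ (c : E) (r : ℝ), ‖c‖ < r ∧ (∀ z : E, ‖z - c‖ = r → ‖x‖ ≤ ‖z‖ ∧ ‖z‖ ≤ ‖y‖) ∧
      ‖x - c‖ = r ∧ ‖y - c‖ = r) ↔ SameRay ℝ y (-x) :=
  ⟨fun ⟨_, _, hcr, hsub, hxc, hyc⟩ =>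
      sameRay_neg_of_sphere_subset_annulus hxy hcr.le hsub hxc hyc,
    exists_sphere_subset_annulus_of_sameRay hx hxy.le⟩

end Annulus

lemma singularPair_iff_sameRay {l : ℝ} (hl : 0 < l) {x y : ℂ}
    (hx : ‖x‖ = Real.exp (-l)) (hy : ‖y‖ = 1) :
    SingularPair l x y ↔ SameRay ℝ y (-x) := by
  have hxy : ‖x‖ < ‖y‖ := by rw [hx, hy]; exact Real.exp_lt_one_iff.mpr (neg_neg_of_pos hl)
  rw [← exists_sphere_subset_annulus_iff_sameRay (hx ▸ Real.exp_pos _) hxy, SingularPair, hx, hy]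

lemma sameRay_neg_iff_eq_neg_exp_mul {l : ℝ} {x y : ℂ}
    (hx : ‖x‖ = Real.exp (-l)) (hy : ‖y‖ = 1) :
    SameRay ℝ y (-x) ↔ y = -(Real.exp l : ℂ) * x := by
  have hexp : (Real.exp l : ℂ) * (Real.exp (-l) : ℂ) = 1 := by
    rw [← Complex.ofReal_mul, ← Real.exp_add, add_neg_cancel, Real.exp_zero, Complex.ofReal_one]
  rw [sameRay_iff_norm_smul_eq, norm_neg, hx, hy, one_smul, Complex.real_smul]
  constructor
  · intro h
    linear_combination (-(Real.exp l : ℂ)) * h - y * hexp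
  · intro h
    linear_combination (-(Real.exp (-l) : ℂ)) * h + x * hexp

/-- Characterization of singular pairs: `(x, y)` with `|x| = e^{-l}`, `|y| = 1`
is a singular pair iff `y = -e^l·x`; in particular each point of the inner
boundary circle belongs to exactly one singular pair. -/
theorem singularPair_iff (l : ℝ) (hl : 0 < l) (x y : ℂ)
    (hx : ‖x‖ = Real.exp (-l)) (hy : ‖y‖ = 1) :
    (SingularPair l x y ↔ y = -(Real.exp l : ℂ) * x) ∧
    (∃! y' : ℂ, ‖y'‖ = 1 ∧ SingularPair l x y') := by
  have key : ∀ y : ℂ, ‖y‖ = 1 → (SingularPair l x y ↔ y = -(Real.exp l : ℂ) * x) :=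
    fun y hy => (singularPair_iff_sameRay hl hx hy).trans (sameRay_neg_iff_eq_neg_exp_mul hx hy)
  have hy₀ : ‖-(Real.exp l : ℂ) * x‖ = 1 := by
    rw [norm_mul, norm_neg, Complex.norm_real, Real.norm_of_nonneg (Real.exp_pos l).le, hx,
      ← Real.exp_add, add_neg_cancel, Real.exp_zero]
  exact ⟨key y hy, _, ⟨hy₀, (key _ hy₀).mpr rfl⟩, fun y' ⟨hy', h⟩ => (key y' hy').mp h⟩
end

section
/- The modulus of a round annulus is a conformal invariant: let l₁, l₂ > 0 and let A_{lⱼ} = {z ∈ ℂ : e^{-lⱼ} < |z| < 1} for j = 1, 2. Suppose f : ℂ → ℂ is holomorphic on the open unit disc 𝔻 = {|z| < 1}, maps 𝔻 bijectively onto 𝔻, and maps A_{l₁} bijectively onto A_{l₂}. Then l₁ = l₂. (Hence for 0 < l₁ < l₂ the annuli A_{l₁} and A_{l₂} are not conformally equivalent by an automorphism of the unit disc, since such an automorphism preserves hyperbolic area.) -/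
/-!
Put `rᵢ = e^{-lᵢ}`. Since `f` permutes the unit disc and maps one annulus onto the other, it maps
the closed disc of radius `r₁` bijectively onto that of radius `r₂`, and by continuity `|f| = r₂`
on `|z| = r₁`. Let `a` be the zero of `f` and `n` its order. Dividing `f` by the `n`-th power of
the Blaschke factor `r₁ (z - a) / (r₁² - ā z)` of the small disc leaves a zero-free function of
constant modulus on its boundary circle, hence a constant by the maximum principle applied to it
and to its reciprocal.
Injectivity forces the power to be `1`, and the identity theorem makes `f` this Möbius map on the
whole unit disc. A Möbius map permuting the unit disc preserves the unit circle; comparing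
`|r₁² - ā u| = r₂ r₁ |u - a|` at the two points `u` of the circle on the line through `a` gives
`r₁ = r₂`.
-/

open Complex Metric Set Filter Topology
open scoped ComplexConjugate

theorem Set.BijOn.sdiff {α β : Type*} {f : α → β} {s s' : Set α} {t t' : Set β}
    (h : BijOn f s t) (h' : BijOn f s' t') (hs : s' ⊆ s) : BijOn f (s \ s') (t \ t') := by
  refine ⟨fun x hx => ⟨h.mapsTo hx.1, fun hfx => ?_⟩, h.injOn.mono sdiff_subset,
    fun y hy => ?_⟩
  · obtain ⟨x', hx', hfx'⟩ := h'.surjOn hfx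
    exact hx.2 (h.injOn (hs hx') hx.1 hfx' ▸ hx')
  · obtain ⟨x, hx, rfl⟩ := h.surjOn hy.1
    exact ⟨x, ⟨hx, fun hx' => hy.2 (h'.mapsTo hx')⟩, rfl⟩

theorem ball_zero_one_sdiff_annulus {E : Type*} [SeminormedAddCommGroup E] {r : ℝ} (hr : r < 1) :
    ball (0 : E) 1 \ {z | r < ‖z‖ ∧ ‖z‖ < 1} = closedBall 0 r := by
  ext z
  simp only [Set.mem_sdiff, mem_ball_zero_iff, mem_closedBall_zero_iff]
  exact ⟨fun ⟨h₁, h⟩ => le_of_not_gt fun hr' => h ⟨hr', h₁⟩,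
    fun h => ⟨h.trans_lt hr, fun h' => h'.1.not_ge h⟩⟩

theorem bijOn_closedBall_of_bijOn_annulus {E F : Type*} [SeminormedAddCommGroup E]
    [SeminormedAddCommGroup F] {f : E → F} {r₁ r₂ : ℝ} (hr₁ : r₁ < 1) (hr₂ : r₂ < 1)
    (hdisc : BijOn f (ball 0 1) (ball 0 1))
    (hann : BijOn f {z | r₁ < ‖z‖ ∧ ‖z‖ < 1} {w | r₂ < ‖w‖ ∧ ‖w‖ < 1}) :
    BijOn f (closedBall 0 r₁) (closedBall 0 r₂) := by
  simpa only [ball_zero_one_sdiff_annulus hr₁, ball_zero_one_sdiff_annulus hr₂] using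
    hdisc.sdiff hann fun z hz => mem_ball_zero_iff.mpr hz.2

section Annulus

variable {E : Type*} [NormedAddCommGroup E] [NormedSpace ℝ E]

theorem sphere_subset_closure_annulus {r : ℝ} (hr₀ : 0 < r) (hr : r < 1) :
    sphere (0 : E) r ⊆ closure {z | r < ‖z‖ ∧ ‖z‖ < 1} := by
  have hA : {z : E | r < ‖z‖ ∧ ‖z‖ < 1} = ball 0 1 ∩ (closedBall 0 r)ᶜ := by
    ext z; simp [and_comm]
  intro z hz
  rw [mem_sphere_zero_iff_norm] at hz
  rw [hA]
  refine isOpen_ball.inter_closure ⟨by simpa [hz] using hr, ?_⟩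
  rw [closure_compl, interior_closedBall _ hr₀.ne']
  simp [hz]

theorem norm_eq_of_mem_sphere_of_mapsTo_annulus {F : Type*} [NormedAddCommGroup F] {f : E → F}
    {r₁ r₂ : ℝ} (hf : ContinuousOn f (ball 0 1)) (hr₁₀ : 0 < r₁) (hr₁ : r₁ < 1)
    (hK : MapsTo f (closedBall 0 r₁) (closedBall 0 r₂))
    (hA : MapsTo f {z | r₁ < ‖z‖ ∧ ‖z‖ < 1} {w | r₂ ≤ ‖w‖}) :
    ∀ z ∈ sphere (0 : E) r₁, ‖f z‖ = r₂ := by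
  intro z hz
  refine le_antisymm (mem_closedBall_zero_iff.mp (hK (sphere_subset_closedBall hz))) ?_
  have hz₁ : z ∈ ball (0 : E) 1 := by
    rwa [mem_ball_zero_iff, mem_sphere_zero_iff_norm.mp hz]
  have hcl := (hf.continuousAt (isOpen_ball.mem_nhds hz₁)).continuousWithinAt.mem_closure_image
    (sphere_subset_closure_annulus hr₁₀ hr₁ hz)
  exact (isClosed_le continuous_const continuous_norm).closure_subset_iff.mpr hA.image_subset hcl

end Annulus

theorem DifferentiableOn.exists_eq_pow_smul {E : Type*} [NormedAddCommGroup E] [NormedSpace ℂ E]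
    [CompleteSpace E] {f : ℂ → E} {s : Set ℂ} {a : ℂ} (hf : DifferentiableOn ℂ f s)
    (hs : s ∈ 𝓝 a) (hfa : ¬∀ᶠ z in 𝓝 a, f z = 0) :
    ∃ (n : ℕ) (g : ℂ → E), DifferentiableOn ℂ g s ∧ g a ≠ 0 ∧ ∀ z, f z = (z - a) ^ n • g z := by
  obtain ⟨p, hp⟩ := hf.analyticAt hs
  have hp0 : p ≠ 0 := fun h => hfa (hp.locally_zero_iff.mpr h)
  refine ⟨p.order, (Function.swap dslope a)^[p.order] f, ?_,
    hp.iterate_dslope_fslope_ne_zero hp0, hp.eq_pow_order_mul_iterate_dslope⟩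
  induction p.order with
  | zero => exact hf
  | succ n ih => rw [Function.iterate_succ_apply']; exact (differentiableOn_dslope hs).mpr ih

theorem Complex.eqOn_closedBall_of_forall_mem_sphere_norm_eq {f : ℂ → ℂ} {c : ℂ} {R M : ℝ}
    (hR : 0 < R) (hf : DiffContOnCl ℂ f (ball c R)) (hf₀ : ∀ z ∈ closedBall c R, f z ≠ 0)
    (hM : ∀ z ∈ sphere c R, ‖f z‖ = M) : EqOn f (Function.const ℂ (f c)) (closedBall c R) := by
  rw [← closure_ball c hR.ne'] at hf₀
  have hle : ∀ z ∈ closure (ball c R), ‖f z‖ ≤ M := fun z hz =>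
    norm_le_of_forall_mem_frontier_norm_le isBounded_ball hf
      (fun w hw => (hM w (frontier_ball c hR.ne' ▸ hw)).le) hz
  have hinv : ‖(f c)⁻¹‖ ≤ M⁻¹ :=
    norm_le_of_forall_mem_frontier_norm_le isBounded_ball (hf.inv hf₀)
      (fun w hw => by simp [hM w (frontier_ball c hR.ne' ▸ hw)])
      (subset_closure (mem_ball_self hR))
  have hM₀ : 0 < M := by
    have hw : c + R ∈ sphere c R := by simp [abs_of_pos hR]
    rw [← hM _ hw]
    exact norm_pos_iff.mpr (hf₀ _ (frontier_subset_closure (frontier_ball c hR.ne' ▸ hw)))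
  have hfc : 0 < ‖f c‖ := norm_pos_iff.mpr (hf₀ c (subset_closure (mem_ball_self hR)))
  refine eqOn_closedBall_of_isMaxOn_norm hf fun z hz => ?_
  rw [norm_inv] at hinv
  exact (hle z (subset_closure hz)).trans ((inv_le_inv₀ hfc hM₀).mp hinv)

theorem sq_norm_sq_sub_conj_mul_sub (R : ℝ) (a z : ℂ) :
    ‖(R : ℂ) ^ 2 - conj a * z‖ ^ 2 - R ^ 2 * ‖z - a‖ ^ 2 =
      (R ^ 2 - ‖z‖ ^ 2) * (R ^ 2 - ‖a‖ ^ 2) := by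
  simp only [Complex.sq_norm, normSq_apply, sub_re, sub_im, mul_re, mul_im, conj_re, conj_im,
    ← ofReal_pow, ofReal_re, ofReal_im]
  ring

theorem sq_norm_add_conj_mul_sub (R : ℝ) (a w : ℂ) :
    ‖(R : ℂ) + conj a * w‖ ^ 2 - ‖R * w + a‖ ^ 2 = (1 - ‖w‖ ^ 2) * (R ^ 2 - ‖a‖ ^ 2) := by
  simp only [Complex.sq_norm, normSq_apply, add_re, add_im, mul_re, mul_im, conj_re, conj_im,
    ofReal_re, ofReal_im]
  ring

theorem norm_sq_sub_conj_mul_eq_of_norm_eq {R : ℝ} (hR : 0 ≤ R) (a : ℂ) {z : ℂ} (hz : ‖z‖ = R) :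
    ‖(R : ℂ) ^ 2 - conj a * z‖ = R * ‖z - a‖ := by
  have h := sq_norm_sq_sub_conj_mul_sub R a z
  rw [hz, sub_self, zero_mul, sub_eq_zero, ← mul_pow] at h
  exact (pow_left_inj₀ (norm_nonneg _) (by positivity) two_ne_zero).mp h

theorem sq_sub_conj_mul_ne_zero {R : ℝ} {a z : ℂ} (ha : ‖a‖ < R) (hz : ‖z‖ ≤ R) :
    (R : ℂ) ^ 2 - conj a * z ≠ 0 := by
  intro h
  have h' : ‖conj a * z‖ = R ^ 2 := by
    rw [← sub_eq_zero.mp h, norm_pow, norm_real, Real.norm_eq_abs, sq_abs]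
  rw [norm_mul, norm_conj] at h'
  nlinarith [norm_nonneg a, norm_nonneg z]

theorem exists_mem_ball_mul_sub_eq {R : ℝ} {a w : ℂ} (ha : ‖a‖ < R) (hw : ‖w‖ < 1) :
    ∃ z ∈ ball (0 : ℂ) R, R * (z - a) = w * ((R : ℂ) ^ 2 - conj a * z) := by
  have hR : 0 < R := (norm_nonneg a).trans_lt ha
  have hd : ‖conj a * w‖ < R := by
    rw [norm_mul, norm_conj]
    nlinarith [norm_nonneg a, norm_nonneg w]
  have hd₀ : (R : ℂ) + conj a * w ≠ 0 := fun h => by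
    rw [eq_neg_of_add_eq_zero_right h, norm_neg, norm_real, Real.norm_eq_abs,
      abs_of_pos hR] at hd
    exact hd.false
  -- the witness is the image of `w` under the inverse of `z ↦ R (z - a) / (R² - ā z)`
  have hz := div_mul_cancel₀ ((R : ℂ) * (R * w + a)) hd₀
  refine ⟨R * (R * w + a) / (R + conj a * w), ?_, by linear_combination hz⟩
  have hpos : 0 < (1 - ‖w‖ ^ 2) * (R ^ 2 - ‖a‖ ^ 2) :=
    mul_pos (by nlinarith [norm_nonneg w]) (by nlinarith [norm_nonneg a])
  have hnum : ‖(R : ℂ) * w + a‖ < ‖(R : ℂ) + conj a * w‖ :=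
    lt_of_pow_lt_pow_left₀ 2 (norm_nonneg _) (by linarith [sq_norm_add_conj_mul_sub R a w])
  rw [mem_ball_zero_iff, norm_div, norm_mul, norm_real, Real.norm_eq_abs, abs_of_pos hR,
    div_lt_iff₀ (norm_pos_iff.mpr hd₀)]
  exact mul_lt_mul_of_pos_left hnum hR

/-- The identity is stated without division because it is later continued to the unit disc by the
identity theorem, and there the denominator may a priori vanish. -/
theorem exists_mul_sq_sub_conj_mul_pow_eq {f : ℂ → ℂ} {R ρ : ℝ} {a : ℂ}
    (hf : DifferentiableOn ℂ f (closedBall 0 R)) (ha : ‖a‖ < R)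
    (hzero : ∀ z ∈ closedBall (0 : ℂ) R, f z = 0 ↔ z = a)
    (hρ : ∀ z ∈ sphere (0 : ℂ) R, ‖f z‖ = ρ) :
    ∃ (n : ℕ) (C : ℂ), ‖C‖ = ρ * R ^ n ∧
      ∀ z ∈ closedBall (0 : ℂ) R, f z * ((R : ℂ) ^ 2 - conj a * z) ^ n = C * (z - a) ^ n := by
  have hR : 0 < R := (norm_nonneg a).trans_lt ha
  have haR : closedBall (0 : ℂ) R ∈ 𝓝 a := closedBall_mem_nhds_of_mem (mem_ball_zero_iff.mpr ha)
  have hfa : ¬∀ᶠ z in 𝓝 a, f z = 0 := fun h => by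
    have hF : ∀ᶠ z in 𝓝[≠] a, False := by
      filter_upwards [nhdsWithin_le_nhds (h.and haR), self_mem_nhdsWithin] with z ⟨hfz, hz⟩ hza
      exact hza ((hzero z hz).mp hfz)
    exact hF.exists.elim fun _ => id
  obtain ⟨n, g, hg, hga, hfg⟩ := hf.exists_eq_pow_smul haR hfa
  set q : ℂ → ℂ := fun z => g z * ((R : ℂ) ^ 2 - conj a * z) ^ n with hq_def
  have hq : DiffContOnCl ℂ q (ball 0 R) := by
    refine DifferentiableOn.diffContOnCl ?_
    rw [closure_ball _ hR.ne']
    exact hg.mul (by fun_prop)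
  have hq₀ : ∀ z ∈ closedBall (0 : ℂ) R, q z ≠ 0 := by
    intro z hz
    refine mul_ne_zero ?_
      (pow_ne_zero _ (sq_sub_conj_mul_ne_zero ha (mem_closedBall_zero_iff.mp hz)))
    rcases eq_or_ne z a with rfl | hza
    · exact hga
    · intro hgz
      exact hza ((hzero z hz).mp (by rw [hfg, hgz, smul_zero]))
  have hqρ : ∀ z ∈ sphere (0 : ℂ) R, ‖q z‖ = ρ * R ^ n := by
    intro z hz
    have hzR := mem_sphere_zero_iff_norm.mp hz
    rw [← hρ z hz, hfg, hq_def]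
    simp only [norm_mul, norm_pow, norm_smul, norm_sq_sub_conj_mul_eq_of_norm_eq hR.le a hzR]
    ring
  have hconst := eqOn_closedBall_of_forall_mem_sphere_norm_eq hR hq hq₀ hqρ
  have hRs : (R : ℂ) ∈ sphere (0 : ℂ) R := by simp [abs_of_pos hR]
  refine ⟨n, q 0, ?_, fun z hz => ?_⟩
  · rw [← hqρ _ hRs, hconst (sphere_subset_closedBall hRs), Function.const_apply]
  · rw [hfg, smul_eq_mul, show q 0 = q z from (hconst hz).symm, hq_def]
    ring

theorem exists_pow_eq_one_ne_one {n : ℕ} (hn : n ≠ 1) : ∃ ζ : ℂ, ‖ζ‖ = 1 ∧ ζ ^ n = 1 ∧ ζ ≠ 1 := by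
  rcases Nat.lt_or_gt_of_ne hn with h | h
  · exact ⟨-1, by simp, by simp [Nat.lt_one_iff.mp h], by norm_num⟩
  · have hζ := isPrimitiveRoot_exp n (by omega)
    exact ⟨_, hζ.norm'_eq_one (by omega), hζ.pow_eq_one, hζ.ne_one h⟩

theorem eq_one_of_injOn_of_mul_sq_sub_conj_mul_pow_eq {f : ℂ → ℂ} {R : ℝ} {a C : ℂ} {n : ℕ}
    (ha : ‖a‖ < R) (hf : InjOn f (ball 0 R))
    (hfC : ∀ z ∈ ball (0 : ℂ) R, f z * ((R : ℂ) ^ 2 - conj a * z) ^ n = C * (z - a) ^ n) :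
    n = 1 := by
  have hR : (R : ℂ) ^ n ≠ 0 := pow_ne_zero _ (ofReal_ne_zero.mpr ((norm_nonneg a).trans_lt ha).ne')
  have hval : ∀ w : ℂ, ‖w‖ < 1 → ∃ z ∈ ball (0 : ℂ) R,
      f z * R ^ n = C * w ^ n ∧ R * (z - a) = w * ((R : ℂ) ^ 2 - conj a * z) := by
    intro w hw
    obtain ⟨z, hz, hwz⟩ := exists_mem_ball_mul_sub_eq ha hw
    have hD := pow_ne_zero n (sq_sub_conj_mul_ne_zero ha (mem_ball_zero_iff.mp hz).le)
    refine ⟨z, hz, mul_right_cancel₀ hD ?_, hwz⟩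
    calc f z * R ^ n * ((R : ℂ) ^ 2 - conj a * z) ^ n
        = R ^ n * (f z * ((R : ℂ) ^ 2 - conj a * z) ^ n) := by ring
      _ = C * (R * (z - a)) ^ n := by rw [hfC z hz, mul_pow]; ring
      _ = C * w ^ n * ((R : ℂ) ^ 2 - conj a * z) ^ n := by rw [hwz, mul_pow]; ring
  by_contra hn
  obtain ⟨ζ, hζ₁, hζn, hζ⟩ := exists_pow_eq_one_ne_one hn
  obtain ⟨z₁, hz₁, hf₁, hB₁⟩ := hval (1 / 2) (by norm_num)
  obtain ⟨z₂, hz₂, hf₂, hB₂⟩ := hval (ζ / 2) (by rw [norm_div, hζ₁]; norm_num)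
  obtain rfl : z₁ = z₂ :=
    hf hz₁ hz₂ (mul_right_cancel₀ hR (by rw [hf₁, hf₂, div_pow, div_pow, hζn, one_pow]))
  have hD := sq_sub_conj_mul_ne_zero ha (mem_ball_zero_iff.mp hz₁).le
  exact hζ (mul_right_cancel₀ hD (by linear_combination 2 * (hB₂ - hB₁))).symm

theorem exists_mul_sq_sub_conj_mul_eq_of_injOn {f : ℂ → ℂ} {R ρ : ℝ} {a : ℂ}
    (hf : DifferentiableOn ℂ f (closedBall 0 R)) (hinj : InjOn f (closedBall 0 R))
    (ha : ‖a‖ < R) (hfa : f a = 0) (hρ : ∀ z ∈ sphere (0 : ℂ) R, ‖f z‖ = ρ) :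
    ∃ C : ℂ, ‖C‖ = ρ * R ∧
      ∀ z ∈ closedBall (0 : ℂ) R, f z * ((R : ℂ) ^ 2 - conj a * z) = C * (z - a) := by
  have ha' : a ∈ closedBall (0 : ℂ) R := mem_closedBall_zero_iff.mpr ha.le
  obtain ⟨n, C, hC, hfC⟩ := exists_mul_sq_sub_conj_mul_pow_eq hf ha
    (fun z hz => ⟨fun h => hinj hz ha' (h.trans hfa.symm), fun h => h ▸ hfa⟩) hρ
  obtain rfl := eq_one_of_injOn_of_mul_sq_sub_conj_mul_pow_eq ha (hinj.mono ball_subset_closedBall)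
    fun z hz => hfC z (ball_subset_closedBall hz)
  exact ⟨C, by simpa using hC, by simpa using hfC⟩

/-- `≤` holds because `F` maps the disc into itself; `≥` because a point of the circle where it
failed would have the same image as a point of the disc, while Möbius maps are injective. -/
theorem norm_sq_sub_conj_mul_eq_of_bijOn {F : ℂ → ℂ} {R : ℝ} {a C : ℂ} (ha : ‖a‖ < R) (hC : C ≠ 0)
    (hF : BijOn F (ball 0 1) (ball 0 1))
    (hFC : ∀ z ∈ ball (0 : ℂ) 1, F z * ((R : ℂ) ^ 2 - conj a * z) = C * (z - a)) :
    ∀ u ∈ sphere (0 : ℂ) 1, ‖(R : ℂ) ^ 2 - conj a * u‖ = ‖C * (u - a)‖ := by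
  intro u hu
  have hu₁ := mem_sphere_zero_iff_norm.mp hu
  have hle : ∀ z ∈ closedBall (0 : ℂ) 1, ‖C * (z - a)‖ ≤ ‖(R : ℂ) ^ 2 - conj a * z‖ := by
    rw [← closure_ball (0 : ℂ) one_ne_zero]
    show closure (ball 0 1) ⊆ {z | ‖C * (z - a)‖ ≤ ‖(R : ℂ) ^ 2 - conj a * z‖}
    refine closure_minimal (fun z hz => ?_) (isClosed_le (by fun_prop) (by fun_prop))
    show ‖C * (z - a)‖ ≤ _
    rw [← hFC z hz, norm_mul]
    exact mul_le_of_le_one_left (norm_nonneg _) (mem_ball_zero_iff.mp (hF.mapsTo hz)).le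
  refine le_antisymm (not_lt.mp fun hlt => ?_) (hle u (sphere_subset_closedBall hu))
  have hD : (R : ℂ) ^ 2 - conj a * u ≠ 0 := norm_pos_iff.mp ((norm_nonneg _).trans_lt hlt)
  obtain ⟨z, hz, hFz⟩ := hF.surjOn (show C * (u - a) / ((R : ℂ) ^ 2 - conj a * u) ∈ ball 0 1 by
    rwa [mem_ball_zero_iff, norm_div, div_lt_one (norm_pos_iff.mpr hD)])
  have hzu : C * ((R : ℂ) ^ 2 - conj a * a) * (z - u) = 0 := by
    have h := hFC z hz
    rw [hFz, div_mul_eq_mul_div, div_eq_iff hD] at h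
    linear_combination -h
  have haR : (R : ℂ) ^ 2 - conj a * a ≠ 0 := sq_sub_conj_mul_ne_zero ha ha.le
  obtain rfl : z = u := sub_eq_zero.mp ((mul_eq_zero.mp hzu).resolve_left (mul_ne_zero hC haR))
  exact (mem_ball_zero_iff.mp hz).ne hu₁

theorem eq_of_forall_mem_sphere_norm_sq_sub_conj_mul_eq {R ρ : ℝ} {a : ℂ} (hR : 0 < R)
    (hρ : ρ < 1) (ha : ‖a‖ < 1)
    (h : ∀ u ∈ sphere (0 : ℂ) 1, ‖(R : ℂ) ^ 2 - conj a * u‖ = ρ * R * ‖u - a‖) : R = ρ := by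
  set u := exp (arg a * I)
  have hu : ‖u‖ = 1 := norm_exp_ofReal_mul_I _
  have hau : a = ‖a‖ * u := (norm_mul_exp_arg_mul_I a).symm
  have hconj : conj a * u = ‖a‖ := by
    conv_lhs => rw [hau]
    rw [map_mul, conj_ofReal, mul_assoc, conj_mul', hu]
    simp
  have hsub : u - a = ((1 - ‖a‖ : ℝ) : ℂ) * u := by
    conv_lhs => rw [hau]
    push_cast; ring
  have hadd : -u - a = -(((1 + ‖a‖ : ℝ) : ℂ) * u) := by
    conv_lhs => rw [hau]
    push_cast; ring
  have h₁ := h u (mem_sphere_zero_iff_norm.mpr hu)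
  have h₂ := h (-u) (by simpa using hu)
  rw [hconj, hsub, ← ofReal_pow, ← ofReal_sub, norm_mul, hu, mul_one, norm_real, norm_real,
    Real.norm_eq_abs, Real.norm_eq_abs, abs_of_pos (sub_pos.mpr ha)] at h₁
  rw [mul_neg, hconj, sub_neg_eq_add, hadd, norm_neg, ← ofReal_pow, ← ofReal_add, norm_mul, hu,
    mul_one, norm_real, norm_real, Real.norm_eq_abs, Real.norm_eq_abs, abs_of_pos (by positivity),
    abs_of_pos (by positivity)] at h₂
  have hs := norm_nonneg a
  rcases abs_cases (R ^ 2 - ‖a‖) with ⟨habs, _⟩ | ⟨habs, _⟩ <;> rw [habs] at h₁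
  · nlinarith
  · have hsρ : ‖a‖ = ρ * R := by linarith
    have hρ₀ : 0 ≤ ρ := nonneg_of_mul_nonneg_left (hsρ ▸ hs) hR
    have hRs : R ^ 2 = ‖a‖ ^ 2 := by rw [← hsρ] at h₂; linear_combination h₂
    have hR₂ : R ^ 2 * (1 - ρ ^ 2) = 0 := by rw [hsρ] at hRs; linear_combination hRs
    nlinarith [(mul_eq_zero.mp hR₂).resolve_left (by positivity)]

/-- The modulus of a round annulus is a conformal invariant: a holomorphic
bijection of the unit disc mapping the annulus `{e^{-l₁} < |z| < 1}` bijectively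
onto `{e^{-l₂} < |z| < 1}` forces `l₁ = l₂`. -/
theorem annulus_modulus_conformal_invariant (l₁ l₂ : ℝ)
    (hl₁ : 0 < l₁) (hl₂ : 0 < l₂) (f : ℂ → ℂ)
    (hf : DifferentiableOn ℂ f (Metric.ball 0 1))
    (hdisc : Set.BijOn f (Metric.ball 0 1) (Metric.ball 0 1))
    (hann : Set.BijOn f
      {z : ℂ | Real.exp (-l₁) < ‖z‖ ∧ ‖z‖ < 1}
      {z : ℂ | Real.exp (-l₂) < ‖z‖ ∧ ‖z‖ < 1}) :
    l₁ = l₂ := by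
  suffices Real.exp (-l₁) = Real.exp (-l₂) by simpa using this
  have hr₁ : Real.exp (-l₁) < 1 := Real.exp_lt_one_iff.mpr (neg_lt_zero.mpr hl₁)
  have hr₂ : Real.exp (-l₂) < 1 := Real.exp_lt_one_iff.mpr (neg_lt_zero.mpr hl₂)
  set r₁ := Real.exp (-l₁)
  set r₂ := Real.exp (-l₂)
  have hr₁₀ : 0 < r₁ := Real.exp_pos _
  have hr₂₀ : 0 < r₂ := Real.exp_pos _
  have hK := bijOn_closedBall_of_bijOn_annulus hr₁ hr₂ hdisc hann
  have hsphere := norm_eq_of_mem_sphere_of_mapsTo_annulus hf.continuousOn hr₁₀ hr₁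
    hK.mapsTo (hann.mapsTo.mono_right fun w hw => hw.1.le)
  obtain ⟨a, ha, hfa⟩ := hK.surjOn (mem_closedBall_self hr₂₀.le)
  have ha₁ : ‖a‖ < r₁ := (mem_closedBall_zero_iff.mp ha).lt_of_ne fun h =>
    hr₂₀.ne (by simpa [hfa] using hsphere a (mem_sphere_zero_iff_norm.mpr h))
  have hsub : closedBall (0 : ℂ) r₁ ⊆ ball 0 1 := closedBall_subset_ball hr₁
  obtain ⟨C, hC, hfC⟩ := exists_mul_sq_sub_conj_mul_eq_of_injOn (hf.mono hsub)
    (hdisc.injOn.mono hsub) ha₁ hfa hsphere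
  have hglobal : ∀ z ∈ ball (0 : ℂ) 1, f z * ((r₁ : ℂ) ^ 2 - conj a * z) = C * (z - a) :=
    ((hf.mul (by fun_prop)).analyticOnNhd isOpen_ball).eqOn_of_preconnected_of_eventuallyEq
      ((by fun_prop : Differentiable ℂ fun z => C * (z - a)).differentiableOn.analyticOnNhd
        isOpen_ball) (convex_ball 0 1).isPreconnected (mem_ball_self one_pos)
      (eventually_of_mem (closedBall_mem_nhds 0 hr₁₀) hfC)
  have hC₀ : C ≠ 0 := norm_pos_iff.mp (hC ▸ mul_pos hr₂₀ hr₁₀)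
  refine eq_of_forall_mem_sphere_norm_sq_sub_conj_mul_eq hr₁₀ hr₂ (ha₁.trans hr₁)
    fun u hu => ?_
  rw [norm_sq_sub_conj_mul_eq_of_bijOn ha₁ hC₀ hdisc hglobal u hu, norm_mul, hC]
end
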